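/- arXiv:1801.00131 — 4 statements merged into one kernel-verified Lean document; each statement's English description precedes it below -/
import Mathlib

section
/- Let G be an additive abelian group and S a zero-sum free subset of G with |S| = 3. Then |Σ(S)| ≥ 5; furthermore, if no element of S has order 2, then |Σ(S)| ≥ 6. -/
open Finset

def sigmaSet {G : Type*} [AddCommGroup G] [DecidableEq G] (S : Finset G) : Finset G :=
  (S.powerset.filter (· ≠ ∅)).image (fun T => T.sum id)

def ZeroSumFree {G : Type*} [AddCommGroup G] (S : Finset G) : Prop :=
  ∀ T ⊆ S, T ≠ ∅ → T.sum id ≠ 0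

/-!
Write `σ` for the sum of `S`. When `|S| = 3`, the nonempty subsets of `S` are the singletons,
their complements and `S` itself, so `Σ(S) = S ∪ (σ - S) ∪ {σ}`, and zero-sum freeness keeps `σ`
out of the first two parts. An element of `S ∩ (σ - S)` is `x = σ - y` with `x, y ∈ S`; for
`x ≠ y` this would make the third element zero, so `x + x = σ`. Hence `|Σ(S)| ≥ 7 - h`, where `h`
counts the `x ∈ S` with `x + x = σ`. If all three elements had `x + x = σ`, summing would give
`σ + σ = 3σ`, i.e. `σ = 0`; if two of them, `x` and `y`, did, the third `z = σ - x - y` would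
satisfy `z + z = 0`.
-/

section

variable {G : Type*} [AddCommGroup G]

def halvesOfSum [DecidableEq G] (S : Finset G) : Finset G :=
  S.filter (fun x => x + x = S.sum id)

lemma sum_mem_sigmaSet [DecidableEq G] {S T : Finset G} (hTS : T ⊆ S) (hT : T.Nonempty) :
    T.sum id ∈ sigmaSet S :=
  mem_image.mpr ⟨T, mem_filter.mpr ⟨mem_powerset.mpr hTS, hT.ne_empty⟩, rfl⟩

namespace ZeroSumFree

variable {S : Finset G}

lemma sum_ne_zero (hS : ZeroSumFree S) {T : Finset G} (hTS : T ⊆ S) (hT : T.Nonempty) :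
    T.sum id ≠ 0 :=
  hS T hTS hT.ne_empty

lemma ne_zero (hS : ZeroSumFree S) {x : G} (hx : x ∈ S) : x ≠ 0 := by
  simpa using hS.sum_ne_zero (singleton_subset_iff.mpr hx) (singleton_nonempty x)

lemma sum_ne_of_mem [DecidableEq G] (hS : ZeroSumFree S) (hcard : 2 ≤ S.card) {x : G}
    (hx : x ∈ S) : S.sum id ≠ x := by
  have hne : (S.erase x).Nonempty := by
    rw [← card_pos, card_erase_of_mem hx]; omega
  have := hS.sum_ne_zero (erase_subset x S) hne
  rwa [sum_erase_eq_sub hx, id, sub_ne_zero] at this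

lemma add_ne_sum [DecidableEq G] (hS : ZeroSumFree S) (hcard : 3 ≤ S.card) {x y : G}
    (hx : x ∈ S) (hy : y ∈ S) (hxy : x ≠ y) : x + y ≠ S.sum id := by
  have hy' : y ∈ S.erase x := mem_erase.mpr ⟨hxy.symm, hy⟩
  have hne : ((S.erase x).erase y).Nonempty := by
    rw [← card_pos, card_erase_of_mem hy', card_erase_of_mem hx]; omega
  have := hS.sum_ne_zero ((erase_subset y _).trans (erase_subset x S)) hne
  rw [sum_erase_eq_sub hy', sum_erase_eq_sub hx, id, id, sub_sub, sub_ne_zero] at this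
  exact this.symm

end ZeroSumFree

variable [DecidableEq G] {S : Finset G}

lemma insert_sum_union_image_subset_sigmaSet (hcard : 2 ≤ S.card) :
    insert (S.sum id) (S ∪ S.image (S.sum id - ·)) ⊆ sigmaSet S := by
  have hS : S.Nonempty := card_pos.mp (by omega)
  intro z hz
  simp only [mem_insert, mem_union, mem_image] at hz
  rcases hz with rfl | hz | ⟨x, hx, rfl⟩
  · exact sum_mem_sigmaSet subset_rfl hS
  · simpa using sum_mem_sigmaSet (singleton_subset_iff.mpr hz) (singleton_nonempty z)
  · have hne : (S.erase x).Nonempty := by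
      rw [← card_pos, card_erase_of_mem hx]; omega
    simpa [sum_erase_eq_sub hx] using sum_mem_sigmaSet (erase_subset x S) hne

lemma ZeroSumFree.sum_notMem_union_image (hS : ZeroSumFree S) (hcard : 2 ≤ S.card) :
    S.sum id ∉ S ∪ S.image (S.sum id - ·) := by
  simp only [mem_union, mem_image, not_or, not_exists, not_and]
  refine ⟨fun hσ => hS.sum_ne_of_mem hcard hσ rfl, fun x hx h => hS.ne_zero hx ?_⟩
  simpa using h

lemma ZeroSumFree.inter_image_subset_halvesOfSum (hS : ZeroSumFree S) (hcard : 3 ≤ S.card) :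
    S ∩ S.image (S.sum id - ·) ⊆ halvesOfSum S := by
  intro x hx
  obtain ⟨hxS, y, hyS, rfl⟩ := by simpa only [mem_inter, mem_image] using hx
  refine mem_filter.mpr ⟨hxS, ?_⟩
  rcases eq_or_ne (S.sum id - y) y with e | hxy
  · have := sub_add_cancel (S.sum id) y
    rw [e] at this
    rwa [e]
  · exact absurd (sub_add_cancel _ _) (hS.add_ne_sum hcard hxS hyS hxy)

lemma ZeroSumFree.card_sigmaSet_add_card_halvesOfSum (hS : ZeroSumFree S) (hcard : 3 ≤ S.card) :
    2 * S.card + 1 ≤ (sigmaSet S).card + (halvesOfSum S).card := by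
  have hunion := card_union_add_card_inter S (S.image (S.sum id - ·))
  rw [card_image_of_injective _ sub_right_injective] at hunion
  have hinter := card_le_card (hS.inter_image_subset_halvesOfSum hcard)
  have hsigma := card_le_card (insert_sum_union_image_subset_sigmaSet (S := S) (by omega))
  rw [card_insert_of_notMem (hS.sum_notMem_union_image (by omega))] at hsigma
  omega

lemma ZeroSumFree.card_halvesOfSum_le_two (hS : ZeroSumFree S) (hcard : S.card = 3) :
    (halvesOfSum S).card ≤ 2 := by
  suffices halvesOfSum S ≠ S by
    have : (halvesOfSum S).card < S.card :=
      card_lt_card (ssubset_of_subset_of_ne (filter_subset _ S) this)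
    omega
  intro h
  have hsum : ∑ x ∈ S, (x + x) = ∑ _x ∈ S, S.sum id := sum_congr rfl (filter_eq_self.mp h)
  rw [sum_add_distrib, sum_const, hcard] at hsum
  have hσ : S.sum id = 0 := by
    have : S.sum id + S.sum id = 3 • S.sum id := hsum
    rw [succ_nsmul, two_nsmul] at this
    exact add_eq_left.mp this.symm
  exact hS.sum_ne_zero subset_rfl (card_pos.mp (by omega)) hσ

lemma ZeroSumFree.card_halvesOfSum_le_one (hS : ZeroSumFree S) (hcard : S.card = 3)
    (hS2 : ∀ g ∈ S, g + g = 0 → g = 0) : (halvesOfSum S).card ≤ 1 := by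
  refine card_le_one.mpr fun x hx y hy => ?_
  obtain ⟨hxS, hx2⟩ := mem_filter.mp hx
  obtain ⟨hyS, hy2⟩ := mem_filter.mp hy
  by_contra hxy
  have hy' : y ∈ S.erase x := mem_erase.mpr ⟨Ne.symm hxy, hyS⟩
  obtain ⟨z, hz⟩ : ∃ z, (S.erase x).erase y = {z} := by
    rw [← card_eq_one, card_erase_of_mem hy', card_erase_of_mem hxS]; omega
  have hzS : z ∈ S := mem_of_mem_erase (mem_of_mem_erase (hz ▸ mem_singleton_self z))
  have hz_eq : z = S.sum id - x - y := by
    simpa [sum_erase_eq_sub hy', sum_erase_eq_sub hxS] using congrArg (·.sum id) hz.symm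
  have hz2 : z + z = 0 := by
    rw [hz_eq, show S.sum id - x - y + (S.sum id - x - y)
        = (S.sum id - (x + x)) + (S.sum id - (y + y)) by abel, hx2, hy2, sub_self, add_zero]
  exact hS.ne_zero hzS (hS2 z hzS hz2)

end

theorem stmt2 {G : Type*} [AddCommGroup G] [DecidableEq G] (S : Finset G)
    (hS : ZeroSumFree S) (hcard : S.card = 3) :
    5 ≤ (sigmaSet S).card ∧
      ((∀ g ∈ S, ¬(g ≠ 0 ∧ g + g = 0)) → 6 ≤ (sigmaSet S).card) := by
  have hbound := hS.card_sigmaSet_add_card_halvesOfSum hcard.ge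
  refine ⟨?_, fun hS2 => ?_⟩
  · have := hS.card_halvesOfSum_le_two hcard
    omega
  · have := hS.card_halvesOfSum_le_one hcard fun g hg h2 => by_contra fun h0 => hS2 g hg ⟨h0, h2⟩
    omega
end

section
/- Let G be an additive abelian group and let S be a finite zero-sum free subset of G which is partitioned into pairwise disjoint nonempty subsets S₁, …, S_t. Then |Σ(S)| ≥ |Σ(S₁)| + … + |Σ(S_t)|. -/
open Finset

lemma mem_sigmaSet {G : Type*} [AddCommGroup G] [DecidableEq G] {S : Finset G} {x : G} :
    x ∈ sigmaSet S ↔ ∃ T, T ⊆ S ∧ T ≠ ∅ ∧ T.sum id = x := by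
  simp only [sigmaSet, mem_image, mem_filter, mem_powerset]
  constructor
  · rintro ⟨T, ⟨hT, hne⟩, hsum⟩; exact ⟨T, hT, hne, hsum⟩
  · rintro ⟨T, hT, hne, hsum⟩; exact ⟨T, ⟨hT, hne⟩, hsum⟩

lemma key {G : Type*} [AddCommGroup G] [DecidableEq G] (A B : Finset G)
    (hd : Disjoint A B) (h : ZeroSumFree (A ∪ B)) :
    (sigmaSet A).card + (sigmaSet B).card ≤ (sigmaSet (A ∪ B)).card := by
  set s := A.sum id with hs
  have himg : ((sigmaSet B).image (fun y => s + y)) ⊆ sigmaSet (A ∪ B) := by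
    intro x hx
    rw [mem_image] at hx
    obtain ⟨y, hy, hxy⟩ := hx
    obtain ⟨U, hU, hUne, hUsum⟩ := mem_sigmaSet.mp hy
    have hdAU : Disjoint A U := hd.mono_right hU
    refine mem_sigmaSet.mpr ⟨A ∪ U, union_subset_union le_rfl hU, ?_, ?_⟩
    · intro hcon
      exact hUne (subset_empty.mp (hcon ▸ subset_union_right))
    · rw [sum_union hdAU, hUsum, ← hs, hxy]
  have hsubA : sigmaSet A ⊆ sigmaSet (A ∪ B) := by
    intro x hx
    obtain ⟨T, hT, hTne, hTsum⟩ := mem_sigmaSet.mp hx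
    exact mem_sigmaSet.mpr ⟨T, hT.trans subset_union_left, hTne, hTsum⟩
  have hdisj : Disjoint (sigmaSet A) ((sigmaSet B).image (fun y => s + y)) := by
    rw [disjoint_left]
    intro x hxA hxB
    obtain ⟨T, hT, hTne, hTsum⟩ := mem_sigmaSet.mp hxA
    rw [mem_image] at hxB
    obtain ⟨y, hy, hxy⟩ := hxB
    obtain ⟨U, hU, hUne, hUsum⟩ := mem_sigmaSet.mp hy
    -- sum of (A \ T) ∪ U is 0
    have hdTU : Disjoint (A \ T) U := (hd.mono_left (sdiff_subset)).mono_right hU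
    have hVsub : (A \ T) ∪ U ⊆ A ∪ B :=
      union_subset_union sdiff_subset hU
    have hVne : (A \ T) ∪ U ≠ ∅ := by
      intro hcon
      exact hUne (subset_empty.mp (hcon ▸ subset_union_right))
    have hsplit : A.sum id = (A \ T).sum id + T.sum id := (sum_sdiff hT).symm
    have hVsum : ((A \ T) ∪ U).sum id = 0 := by
      rw [sum_union hdTU, hUsum]
      have : s + y = T.sum id := by rw [hxy, hTsum]
      rw [hs] at this
      rw [hsplit] at this
      -- (A\T).sum + T.sum + y = T.sum → (A\T).sum + y = 0
      have := sub_eq_zero.mpr this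
      abel_nf at this ⊢
      linear_combination (norm := abel_nf) this
    exact h _ hVsub hVne hVsum
  have hcard : ((sigmaSet B).image (fun y => s + y)).card = (sigmaSet B).card :=
    card_image_of_injective _ (add_right_injective s)
  calc (sigmaSet A).card + (sigmaSet B).card
      = (sigmaSet A ∪ (sigmaSet B).image (fun y => s + y)).card := by
        rw [card_union_of_disjoint hdisj, hcard]
    _ ≤ (sigmaSet (A ∪ B)).card :=
        card_le_card (union_subset hsubA himg)

lemma stmt3_aux {G : Type*} [AddCommGroup G] [DecidableEq G] (t : ℕ) :
    ∀ (S : Finset G), ZeroSumFree S → ∀ (P : Fin t → Finset G),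
    (∀ i j, i ≠ j → Disjoint (P i) (P j)) → Finset.univ.biUnion P = S →
    (∑ i, (sigmaSet (P i)).card) ≤ (sigmaSet S).card := by
  induction t with
  | zero => intro S _ P _ _; simp
  | succ t ih =>
    intro S hS P hdisj hunion
    set A := P 0 with hA
    set B := Finset.univ.biUnion (fun i : Fin t => P i.succ) with hB
    have hSeq : S = A ∪ B := by
      rw [← hunion]
      ext x
      simp only [mem_biUnion, mem_univ, true_and, mem_union, hA, hB]
      constructor
      · rintro ⟨i, hi⟩
        rcases Fin.eq_zero_or_eq_succ i with h0 | ⟨j, hj⟩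
        · left; rwa [h0] at hi
        · right; exact ⟨j, by rwa [hj] at hi⟩
      · rintro (h0 | ⟨j, hj⟩)
        exacts [⟨0, h0⟩, ⟨j.succ, hj⟩]
    have hdAB : Disjoint A B := by
      rw [hB, disjoint_biUnion_right]
      intro i _
      exact hdisj 0 i.succ (Fin.succ_ne_zero i).symm
    have hBS : B ⊆ S := hSeq ▸ subset_union_right
    have hBzsf : ZeroSumFree B := fun T hT => hS T (hT.trans hBS)
    have hIH := ih B hBzsf (fun i => P i.succ)
      (fun i j hij => hdisj i.succ j.succ (fun h => hij (Fin.succ_injective t h))) rfl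
    rw [Fin.sum_univ_succ]
    calc (sigmaSet (P 0)).card + ∑ i : Fin t, (sigmaSet (P i.succ)).card
        ≤ (sigmaSet A).card + (sigmaSet B).card := by
          exact Nat.add_le_add le_rfl hIH
      _ ≤ (sigmaSet (A ∪ B)).card := key A B hdAB (hSeq ▸ hS)
      _ = (sigmaSet S).card := by rw [← hSeq]

theorem stmt3 {G : Type*} [AddCommGroup G] [DecidableEq G] (S : Finset G)
    (hS : ZeroSumFree S) (t : ℕ) (P : Fin t → Finset G)
    (hne : ∀ i, P i ≠ ∅)
    (hdisj : ∀ i j, i ≠ j → Disjoint (P i) (P j))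
    (hunion : Finset.univ.biUnion P = S) :
    (∑ i, (sigmaSet (P i)).card) ≤ (sigmaSet S).card :=
  stmt3_aux t S hS P hdisj hunion
end

section
/- Let G be an additive abelian group containing an element x of order 20, and let S = {−3x, x, 4x, 5x, 9x, 12x}. Then S is a zero-sum free subset of G with |S| = 6 and |Σ(S)| = 19. -/
open Finset

lemma sum_image_hom {A B : Type*} [AddCommGroup A] [AddCommGroup B] [DecidableEq A]
    [DecidableEq B] (f : A →+ B) (hf : Function.Injective f) (T : Finset A) :
    (T.image f).sum id = f (T.sum id) := by
  rw [Finset.sum_image (fun a _ b _ h => hf h), map_sum]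
  rfl

lemma sigmaSet_image {A B : Type*} [AddCommGroup A] [AddCommGroup B] [DecidableEq A]
    [DecidableEq B] (f : A →+ B) (hf : Function.Injective f) (S : Finset A) :
    sigmaSet (S.image f) = (sigmaSet S).image f := by
  ext y
  simp only [sigmaSet, Finset.mem_image, Finset.mem_filter, Finset.mem_powerset]
  constructor
  · rintro ⟨T, ⟨hTs, hTne⟩, rfl⟩
    obtain ⟨T₀, hT₀, rfl⟩ := Finset.subset_image_iff.mp hTs
    have hT₀ne : T₀ ≠ ∅ := by
      intro h; rw [h] at hTne; simp at hTne
    exact ⟨T₀.sum id, ⟨T₀, ⟨hT₀, hT₀ne⟩, rfl⟩, (sum_image_hom f hf T₀).symm⟩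
  · rintro ⟨z, ⟨T₀, ⟨hT₀, hne⟩, rfl⟩, rfl⟩
    refine ⟨T₀.image f, ⟨Finset.image_subset_image hT₀, ?_⟩, sum_image_hom f hf T₀⟩
    simpa [Finset.image_eq_empty] using hne

theorem stmt14 {G : Type*} [AddCommGroup G] [DecidableEq G] (x : G)
    (hx : addOrderOf x = 20) :
    ZeroSumFree ({-(3 • x), x, 4 • x, 5 • x, 9 • x, 12 • x} : Finset G) ∧
      ({-(3 • x), x, 4 • x, 5 • x, 9 • x, 12 • x} : Finset G).card = 6 ∧
      (sigmaSet ({-(3 • x), x, 4 • x, 5 • x, 9 • x, 12 • x} : Finset G)).card = 19 := by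
  have h20 : (20 : ℕ) • x = 0 := by rw [← hx]; exact addOrderOf_nsmul_eq_zero x
  have h20' : zmultiplesHom G x (20 : ℤ) = 0 := by
    rw [zmultiplesHom_apply]; exact_mod_cast h20
  set f : ZMod 20 →+ G := ZMod.lift 20 ⟨zmultiplesHom G x, h20'⟩ with hf
  have hfn : ∀ n : ℕ, f ((n : ℕ) : ZMod 20) = n • x := by
    intro n
    have h1 : (((n : ℤ)) : ZMod 20) = ((n : ℕ) : ZMod 20) := by push_cast; ring
    rw [← h1, hf, ZMod.lift_coe]
    simp
  have hinj : Function.Injective f := by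
    rw [injective_iff_map_eq_zero]
    intro a ha
    have h2 : f ((a.val : ℕ) : ZMod 20) = 0 := by rwa [ZMod.natCast_val, ZMod.cast_id]
    rw [hfn] at h2
    have hd : addOrderOf x ∣ a.val := addOrderOf_dvd_of_nsmul_eq_zero h2
    rw [hx] at hd
    have h0 : a.val = 0 := Nat.eq_zero_of_dvd_of_lt hd a.val_lt
    have h3 : ((a.val : ℕ) : ZMod 20) = a := by rw [ZMod.natCast_val, ZMod.cast_id]
    rw [← h3, h0]; rfl
  set S₀ : Finset (ZMod 20) := {17, 1, 4, 5, 9, 12} with hS₀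
  have hSeq : ({-(3 • x), x, 4 • x, 5 • x, 9 • x, 12 • x} : Finset G) = S₀.image f := by
    have h17 : f (17 : ZMod 20) = -(3 • x) := by
      have e1 : (17 : ZMod 20) = ((17 : ℕ) : ZMod 20) := by norm_cast
      rw [e1, hfn]
      have e2 : (17 : ℕ) • x + 3 • x = 0 := by rw [← add_nsmul]; exact h20
      exact eq_neg_of_add_eq_zero_left e2
    have h1 : f (1 : ZMod 20) = x := by
      have e1 : (1 : ZMod 20) = ((1 : ℕ) : ZMod 20) := by norm_cast
      rw [e1, hfn, one_nsmul]
    have h4 : f (4 : ZMod 20) = 4 • x := by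
      have e1 : (4 : ZMod 20) = ((4 : ℕ) : ZMod 20) := by norm_cast
      rw [e1, hfn]
    have h5 : f (5 : ZMod 20) = 5 • x := by
      have e1 : (5 : ZMod 20) = ((5 : ℕ) : ZMod 20) := by norm_cast
      rw [e1, hfn]
    have h9 : f (9 : ZMod 20) = 9 • x := by
      have e1 : (9 : ZMod 20) = ((9 : ℕ) : ZMod 20) := by norm_cast
      rw [e1, hfn]
    have h12 : f (12 : ZMod 20) = 12 • x := by
      have e1 : (12 : ZMod 20) = ((12 : ℕ) : ZMod 20) := by norm_cast
      rw [e1, hfn]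
    rw [hS₀]
    simp only [Finset.image_insert, Finset.image_singleton, h17, h1, h4, h5, h9, h12]
  have hcard0 : S₀.card = 6 := by decide
  have hzsf0 : (0 : ZMod 20) ∉ sigmaSet S₀ := by decide
  have hsig0 : (sigmaSet S₀).card = 19 := by decide
  rw [hSeq]
  refine ⟨?_, ?_, ?_⟩
  · intro T hT hne
    obtain ⟨T₀, hT₀, rfl⟩ := Finset.subset_image_iff.mp hT
    have hT₀ne : T₀ ≠ ∅ := by intro h; rw [h] at hne; simp at hne
    rw [sum_image_hom f hinj]
    intro h
    have hz : T₀.sum id = 0 := hinj (by simpa using h)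
    apply hzsf0
    rw [← hz]
    exact Finset.mem_image_of_mem _ (by
      simp only [Finset.mem_filter, Finset.mem_powerset]
      exact ⟨hT₀, hT₀ne⟩)
  · rw [Finset.card_image_of_injective _ hinj]; exact hcard0
  · rw [sigmaSet_image f hinj, Finset.card_image_of_injective _ hinj]; exact hsig0
end

section
/- Let G be an additive abelian group, let x₁ ∈ G have order 2, and let g ∈ G with 2g ∈ ⟨x₁⟩, and h ∈ G, such that S = {x₁, g, h, x₁+h, g+h, x₁+g+h} is a zero-sum free subset of G of size 6. Then |Σ(S)| = 19. -/
open Finset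

section Aux

lemma mod_nsmul {G : Type*} [AddCommGroup G] {x : G} {n : ℕ} (hx : n • x = 0) (k : ℕ) :
    (k % n) • x = k • x := by
  conv_rhs => rw [← Nat.div_add_mod k n]
  rw [add_nsmul, mul_nsmul, hx, smul_zero, zero_add]

variable {M G : Type*} [AddCommGroup M] [DecidableEq M] [AddCommGroup G] [DecidableEq G]

lemma zsf_not_mem {S : Finset G} (hS : ZeroSumFree S) : (0 : G) ∉ sigmaSet S := by
  simp only [sigmaSet, mem_image, mem_filter, mem_powerset, not_exists]
  rintro T ⟨⟨hT, hne⟩, h0⟩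
  exact hS T hT hne h0

lemma sigma_image (φ : M →+ G) (S₀ : Finset M) (hinj : Set.InjOn φ S₀) :
    sigmaSet (S₀.image φ) = (sigmaSet S₀).image φ := by
  ext x
  simp only [sigmaSet, mem_image, mem_filter, mem_powerset]
  constructor
  · rintro ⟨T, ⟨hT, hne⟩, rfl⟩
    set T₀ := S₀.filter (fun s => φ s ∈ T) with hT₀def
    have hsub : T₀ ⊆ S₀ := filter_subset _ _
    have himg : T₀.image φ = T := by
      apply subset_antisymm
      · intro y hy
        obtain ⟨s, hs, rfl⟩ := mem_image.mp hy
        exact (mem_filter.mp hs).2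
      · intro y hy
        obtain ⟨s, hs, rfl⟩ := mem_image.mp (hT hy)
        exact mem_image_of_mem φ (mem_filter.mpr ⟨hs, hy⟩)
    have hsum : T.sum id = φ (T₀.sum id) := by
      rw [← himg, sum_image (fun a ha b hb => hinj (hsub ha) (hsub hb)), map_sum]
      rfl
    refine ⟨T₀.sum id, ⟨T₀, ⟨hsub, ?_⟩, rfl⟩, hsum.symm⟩
    intro h0
    rw [h0, image_empty] at himg
    exact hne himg.symm
  · rintro ⟨t, ⟨T₀, ⟨hT₀, hne⟩, rfl⟩, rfl⟩
    refine ⟨T₀.image φ, ⟨image_subset_image hT₀, ?_⟩, ?_⟩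
    · intro h0
      exact hne (image_eq_empty.mp h0)
    · rw [sum_image (fun a ha b hb => hinj (hT₀ ha) (hT₀ hb)), map_sum]
      rfl

lemma key_s16 (φ : M →+ G) (S₀ : Finset M) (S : Finset G) (him : S₀.image φ = S)
    (hc0 : S₀.card = 6) (hcard6 : S.card = 6)
    (hSig : (sigmaSet S₀).card = 19)
    (hdiff : ∀ a ∈ sigmaSet S₀, ∀ b ∈ sigmaSet S₀, a ≠ b →
      (a - b ∈ sigmaSet S₀ ∨ b - a ∈ sigmaSet S₀ ∨
        (a - b) + (a - b) ∈ sigmaSet S₀ ∨ (b - a) + (b - a) ∈ sigmaSet S₀))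
    (hS : ZeroSumFree S) : (sigmaSet S).card = 19 := by
  have hinj0 : Set.InjOn φ S₀ := by
    apply Finset.injOn_of_card_image_eq
    rw [him, hcard6, hc0]
  have hsi : sigmaSet S = (sigmaSet S₀).image φ := by
    rw [← him, sigma_image φ S₀ hinj0]
  have h0 : (0 : G) ∉ sigmaSet S := zsf_not_mem hS
  have hmem : ∀ t ∈ sigmaSet S₀, φ t ∈ sigmaSet S := by
    intro t ht
    rw [hsi]
    exact mem_image_of_mem φ ht
  have hinjSig : Set.InjOn φ (sigmaSet S₀) := by
    intro a ha b hb he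
    by_contra hne
    have hd : φ (a - b) = 0 := by rw [map_sub, he, sub_self]
    have hd' : φ (b - a) = 0 := by rw [map_sub, he, sub_self]
    have hdd : φ ((a - b) + (a - b)) = 0 := by rw [map_add, hd, add_zero]
    have hdd' : φ ((b - a) + (b - a)) = 0 := by rw [map_add, hd', add_zero]
    rcases hdiff a (mem_coe.mp ha) b (mem_coe.mp hb) hne with hc | hc | hc | hc
    · exact h0 (hd ▸ hmem _ hc)
    · exact h0 (hd' ▸ hmem _ hc)
    · exact h0 (hdd ▸ hmem _ hc)
    · exact h0 (hdd' ▸ hmem _ hc)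
  rw [hsi, card_image_of_injOn hinjSig, hSig]

end Aux

section Homs

variable {G : Type*} [AddCommGroup G]

def fA (x₁ g h : G) (p : ZMod 2 × ZMod 2 × ℤ) : G :=
  p.1.val • x₁ + p.2.1.val • g + p.2.2 • h

def homA (x₁ g h : G) (hx : 2 • x₁ = 0) (hg : 2 • g = 0) :
    (ZMod 2 × ZMod 2 × ℤ) →+ G :=
  AddMonoidHom.mk' (fA x₁ g h) (by
    rintro ⟨a, b, c⟩ ⟨a', b', c'⟩
    show (a + a').val • x₁ + (b + b').val • g + (c + c') • h = _
    rw [ZMod.val_add, ZMod.val_add, mod_nsmul hx, mod_nsmul hg, add_nsmul, add_nsmul,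
      add_zsmul]
    show _ = (a.val • x₁ + b.val • g + c • h) + (a'.val • x₁ + b'.val • g + c' • h)
    abel)

def fB (g h : G) (p : ZMod 4 × ℤ) : G := p.1.val • g + p.2 • h

def homB (g h : G) (hg : 4 • g = 0) : (ZMod 4 × ℤ) →+ G :=
  AddMonoidHom.mk' (fB g h) (by
    rintro ⟨b, c⟩ ⟨b', c'⟩
    show (b + b').val • g + (c + c') • h = _
    rw [ZMod.val_add, mod_nsmul hg, add_nsmul, add_zsmul]
    show _ = (b.val • g + c • h) + (b'.val • g + c' • h)
    abel)

end Homs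

def S0A : Finset (ZMod 2 × ZMod 2 × ℤ) :=
  {(1,0,0), (0,1,0), (0,0,1), (1,0,1), (0,1,1), (1,1,1)}

def S0B : Finset (ZMod 4 × ℤ) :=
  {(2,0), (1,0), (0,1), (2,1), (1,1), (3,1)}

def LA : Finset (ZMod 2 × ZMod 2 × ℤ) :=
  {(0,0,1), (0,0,2), (0,0,3), (0,0,4), (0,1,0), (0,1,1), (0,1,2), (0,1,3), (0,1,4),
   (1,0,0), (1,0,1), (1,0,2), (1,0,3), (1,0,4), (1,1,0), (1,1,1), (1,1,2), (1,1,3), (1,1,4)}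

def LB : Finset (ZMod 4 × ℤ) :=
  {(0,1), (0,2), (0,3), (0,4), (1,0), (1,1), (1,2), (1,3), (1,4), (2,0), (2,1), (2,2),
   (2,3), (2,4), (3,0), (3,1), (3,2), (3,3), (3,4)}

lemma sigmaA : sigmaSet S0A = LA := by decide

lemma sigmaB : sigmaSet S0B = LB := by decide

lemma diffA : ∀ a ∈ LA, ∀ b ∈ LA, a ≠ b →
    (a - b ∈ LA ∨ b - a ∈ LA ∨ (a - b) + (a - b) ∈ LA ∨ (b - a) + (b - a) ∈ LA) := by
  decide

lemma diffB : ∀ a ∈ LB, ∀ b ∈ LB, a ≠ b →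
    (a - b ∈ LB ∨ b - a ∈ LB ∨ (a - b) + (a - b) ∈ LB ∨ (b - a) + (b - a) ∈ LB) := by
  decide

theorem stmt16 {G : Type*} [AddCommGroup G] [DecidableEq G] (x₁ g h : G)
    (hx : addOrderOf x₁ = 2) (hg : 2 • g ∈ AddSubgroup.zmultiples x₁)
    (hS : ZeroSumFree ({x₁, g, h, x₁ + h, g + h, x₁ + g + h} : Finset G))
    (hcard : ({x₁, g, h, x₁ + h, g + h, x₁ + g + h} : Finset G).card = 6) :
    (sigmaSet ({x₁, g, h, x₁ + h, g + h, x₁ + g + h} : Finset G)).card = 19 := by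
  have two_x : (2 : ℕ) • x₁ = 0 := by rw [← hx]; exact addOrderOf_nsmul_eq_zero x₁
  have two_xz : (2 : ℤ) • x₁ = 0 := by
    have := natCast_zsmul x₁ 2
    norm_num at this
    rw [this]; exact two_x
  obtain ⟨k, hk⟩ := AddSubgroup.mem_zmultiples_iff.mp hg
  rcases Int.even_or_odd k with ⟨m, hm⟩ | ⟨m, hm⟩
  · -- Case A : 2 • g = 0
    have h2g : (2 : ℕ) • g = 0 := by
      rw [← hk, hm, ← two_mul, mul_comm, mul_zsmul, two_xz, smul_zero]
    have e1 : fA x₁ g h (1,0,0) = x₁ := by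
      simp [fA, show ((1:ZMod 2)).val = 1 from rfl, show ((0:ZMod 2)).val = 0 from rfl]
    have e2 : fA x₁ g h (0,1,0) = g := by
      simp [fA, show ((1:ZMod 2)).val = 1 from rfl, show ((0:ZMod 2)).val = 0 from rfl]
    have e3 : fA x₁ g h (0,0,1) = h := by
      simp [fA, show ((0:ZMod 2)).val = 0 from rfl]
    have e4 : fA x₁ g h (1,0,1) = x₁ + h := by
      simp [fA, show ((1:ZMod 2)).val = 1 from rfl, show ((0:ZMod 2)).val = 0 from rfl]
    have e5 : fA x₁ g h (0,1,1) = g + h := by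
      simp [fA, show ((1:ZMod 2)).val = 1 from rfl, show ((0:ZMod 2)).val = 0 from rfl]
    have e6 : fA x₁ g h (1,1,1) = x₁ + g + h := by
      simp [fA, show ((1:ZMod 2)).val = 1 from rfl]
    have him : S0A.image (homA x₁ g h two_x h2g) =
        ({x₁, g, h, x₁ + h, g + h, x₁ + g + h} : Finset G) := by
      have hco : ∀ p, (homA x₁ g h two_x h2g) p = fA x₁ g h p := fun p => rfl
      simp only [S0A, image_insert, image_singleton, hco, e1, e2, e3, e4, e5, e6]
    refine key_s16 (homA x₁ g h two_x h2g) S0A _ him (by decide) hcard ?_ ?_ hS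
    · rw [sigmaA]; decide
    · rw [sigmaA]; exact diffA
  · -- Case B : 2 • g = x₁
    have h2g : (2 : ℕ) • g = x₁ := by
      rw [← hk, hm, add_zsmul, mul_comm, mul_zsmul, two_xz, smul_zero, zero_add, one_zsmul]
    have h4g : (4 : ℕ) • g = 0 := by
      rw [show (4:ℕ) = 2 * 2 from rfl, mul_nsmul, h2g, two_x]
    have e1 : fB g h (2,0) = x₁ := by
      simp [fB, show ((2:ZMod 4)).val = 2 from rfl, h2g]
    have e2 : fB g h (1,0) = g := by
      simp [fB, show ((1:ZMod 4)).val = 1 from rfl]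
    have e3 : fB g h (0,1) = h := by
      simp [fB, show ((0:ZMod 4)).val = 0 from rfl]
    have e4 : fB g h (2,1) = x₁ + h := by
      simp [fB, show ((2:ZMod 4)).val = 2 from rfl, h2g]
    have e5 : fB g h (1,1) = g + h := by
      simp [fB, show ((1:ZMod 4)).val = 1 from rfl]
    have e6 : fB g h (3,1) = x₁ + g + h := by
      have h3 : (3 : ℕ) • g = x₁ + g := by
        rw [show (3:ℕ) = 2 + 1 from rfl, add_nsmul, h2g, one_nsmul]
      simp [fB, show ((3:ZMod 4)).val = 3 from rfl, h3]
    have him : S0B.image (homB g h h4g) =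
        ({x₁, g, h, x₁ + h, g + h, x₁ + g + h} : Finset G) := by
      have hco : ∀ p, (homB g h h4g) p = fB g h p := fun p => rfl
      simp only [S0B, image_insert, image_singleton, hco, e1, e2, e3, e4, e5, e6]
    refine key_s16 (homB g h h4g) S0B _ him (by decide) hcard ?_ ?_ hS
    · rw [sigmaB]; decide
    · rw [sigmaB]; exact diffB
end
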